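/- For 1 < p ∈ ℝ and G a finitely generated infinite group, the D_p-norm closure of Diff(D_p(G)/ℂ) (the linear span of {f_x − f | f ∈ D_p(G)/ℂ, x ∈ G}, where f_x(g) = f(gx⁻¹)) equals the D_p-norm closure of ℓ^p(G) in D_p(G)/ℂ. -/

import Mathlib

open Filter Topology

namespace PHB

variable {G : Type*} [Group G]

/-- One Dirichlet term `‖f(gs⁻¹) − f(g)‖^p`. -/
noncomputable def dpTerm (p : ℝ) (f : G → ℂ) (s g : G) : ℝ := ‖f (g * s⁻¹) - f g‖ ^ p

/-- Membership in `D_p(G)`. -/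
def MemDp (p : ℝ) (S : Finset G) (f : G → ℂ) : Prop :=
  ∀ s ∈ S, Summable (dpTerm p f s)

/-- The Dirichlet `p`-sum `∑_{s∈S}∑_{g∈G} ‖f(gs⁻¹) − f(g)‖^p`. -/
noncomputable def dirSum (p : ℝ) (S : Finset G) (f : G → ℂ) : ℝ :=
  ∑ s ∈ S, ∑' g, dpTerm p f s g

/-- The `D_p`-norm `(∑_{s,g}|f(gs⁻¹)−f(g)|^p + |f(e)|^p)^{1/p}`. -/
noncomputable def dpNorm (p : ℝ) (S : Finset G) (f : G → ℂ) : ℝ :=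
  (dirSum p S f + ‖f 1‖ ^ p) ^ (1/p)

/-- The norm on `D_p(G)/ℂ`: `(∑_{s,g}|f(gs⁻¹)−f(g)|^p)^{1/p}`. -/
noncomputable def qNorm (p : ℝ) (S : Finset G) (f : G → ℂ) : ℝ :=
  dirSum p S f ^ (1/p)

/-- Boundedness of a function. -/
def BddFun (f : G → ℂ) : Prop := ∃ M : ℝ, ∀ g, ‖f g‖ ≤ M

/-- The sup norm. -/
noncomputable def supNorm (f : G → ℂ) : ℝ := ⨆ g, ‖f g‖

/-- The `BD_p`-norm `‖f‖_∞ + (∑_{s,g}|f(gs⁻¹)−f(g)|^p)^{1/p}`. -/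
noncomputable def bdpNorm (p : ℝ) (S : Finset G) (f : G → ℂ) : ℝ :=
  supNorm f + dirSum p S f ^ (1/p)

/-- Membership in `BD_p(G)`: bounded and finite Dirichlet `p`-sum. -/
def MemBDp (p : ℝ) (S : Finset G) (f : G → ℂ) : Prop := BddFun f ∧ MemDp p S f

/-- Membership in `ℓ^p(G)`. -/
def MemLp' (p : ℝ) (f : G → ℂ) : Prop := Summable fun g => ‖f g‖ ^ p

/-- `f` lies in the `D_p`-closure of the finitely supported functions `ℂG`. -/
def InClosCG (p : ℝ) (S : Finset G) (f : G → ℂ) : Prop :=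
  MemDp p S f ∧ ∀ ε : ℝ, 0 < ε →
    ∃ h : G → ℂ, (Function.support h).Finite ∧ dpNorm p S (f - h) < ε

/-- `f` is a bounded function in the `D_p`-closure of `ℂG`. -/
def InBClosCG (p : ℝ) (S : Finset G) (f : G → ℂ) : Prop := BddFun f ∧ InClosCG p S f

/-- `f` lies in the `D_p`-closure of `ℓ^p(G)`. -/
def InClosLp (p : ℝ) (S : Finset G) (f : G → ℂ) : Prop :=
  MemDp p S f ∧ ∀ ε : ℝ, 0 < ε →
    ∃ h : G → ℂ, MemLp' p h ∧ dpNorm p S (f - h) < ε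

/-- `f` is a bounded function in the `D_p`-closure of `ℓ^p(G)`. -/
def InBClosLp (p : ℝ) (S : Finset G) (f : G → ℂ) : Prop := BddFun f ∧ InClosLp p S f

/-- `f` lies in the `D_p`-closure of `ℓ^p(G) ⊕ ℂ`. -/
def InClosLpC (p : ℝ) (S : Finset G) (f : G → ℂ) : Prop :=
  MemDp p S f ∧ ∀ ε : ℝ, 0 < ε →
    ∃ (h : G → ℂ) (c : ℂ), MemLp' p h ∧ dpNorm p S (f - h - Function.const G c) < ε

/-- A character (nonzero multiplicative linear functional) on `BD_p(G)`. -/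
structure BDpChar (p : ℝ) (S : Finset G) where
  toFun : {f : G → ℂ // MemBDp p S f} → ℂ
  map_add : ∀ (f h : {f : G → ℂ // MemBDp p S f}) (hm : MemBDp p S (f.1 + h.1)),
    toFun ⟨f.1 + h.1, hm⟩ = toFun f + toFun h
  map_mul : ∀ (f h : {f : G → ℂ // MemBDp p S f}) (hm : MemBDp p S (f.1 * h.1)),
    toFun ⟨f.1 * h.1, hm⟩ = toFun f * toFun h
  map_smul : ∀ (c : ℂ) (f : {f : G → ℂ // MemBDp p S f}) (hm : MemBDp p S (c • f.1)),
    toFun ⟨c • f.1, hm⟩ = c * toFun f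
  map_one : ∀ hm : MemBDp p S (1 : G → ℂ), toFun ⟨1, hm⟩ = 1

/-- The weak-* topology on the spectrum `Sp(BD_p(G))`. -/
noncomputable instance (p : ℝ) (S : Finset G) : TopologicalSpace (BDpChar p S) :=
  TopologicalSpace.induced BDpChar.toFun Pi.topologicalSpace

/-- The evaluation embedding `i : G → Sp(BD_p(G))`, `(i g)(f) = f(g)`. -/
def evalChar (p : ℝ) (S : Finset G) (g : G) : BDpChar p S where
  toFun := fun f => f.1 g
  map_add := fun _ _ _ => rfl
  map_mul := fun _ _ _ => rfl
  map_smul := fun _ _ _ => rfl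
  map_one := fun _ => rfl

/-- The `p`-Laplacian `Δ_p f(g) = ∑_{s∈S} |f(gs⁻¹)−f(g)|^{p−2}(f(gs⁻¹)−f(g))`. -/
noncomputable def pLap (p : ℝ) (S : Finset G) (f : G → ℂ) (g : G) : ℂ :=
  ∑ s ∈ S, ((‖f (g * s⁻¹) - f g‖ ^ (p - 2) : ℝ) : ℂ) * (f (g * s⁻¹) - f g)

/-- `f` is `p`-harmonic: `f ∈ D_p(G)` and `Δ_p f ≡ 0`. -/
def PHarmonic (p : ℝ) (S : Finset G) (f : G → ℂ) : Prop :=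
  MemDp p S f ∧ ∀ g, pLap p S f g = 0

/-- The `p`-harmonic boundary `∂_p(G) ⊆ Sp(BD_p(G)) \ G`. -/
def pBoundary (p : ℝ) (S : Finset G) : Set (BDpChar p S) :=
  {x | (∀ g : G, x ≠ evalChar p S g) ∧
    ∀ (f : G → ℂ) (hf : MemBDp p S f), InBClosCG p S f → x.toFun ⟨f, hf⟩ = 0}

/-- The word metric on `G` with respect to the generating set `S`. -/
noncomputable def wordDist (S : Finset G) (x y : G) : ℕ :=
  sInf {n | ∃ l : List G, (∀ a ∈ l, a ∈ S) ∧ l.length = n ∧ x⁻¹ * y = l.prod}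

/-- The word length `|g| = d(e,g)`. -/
noncomputable def wordLen (S : Finset G) (g : G) : ℕ := wordDist S 1 g

/-- Right translation `f_x(g) = f(gx⁻¹)`. -/
def translateFun (f : G → ℂ) (x : G) : G → ℂ := fun g => f (g * x⁻¹)

/-- `φ : G → H` is a rough isometry with constants `a, b, c` for the word metrics. -/
def RoughIsom {G H : Type*} [Group G] [Group H] (S : Finset G) (T : Finset H)
    (φ : G → H) (a b c : ℝ) : Prop :=
  1 ≤ a ∧ 0 ≤ b ∧ 0 < c ∧
  (∀ x y : G, (1/a) * (wordDist S x y : ℝ) - b ≤ (wordDist T (φ x) (φ y) : ℝ) ∧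
    (wordDist T (φ x) (φ y) : ℝ) ≤ a * (wordDist S x y : ℝ) + b) ∧
  ∀ h : H, ∃ x : G, (wordDist T (φ x) h : ℝ) < c

/-- `S` is a symmetric generating set of `G`. -/
def SymmGen (S : Finset G) : Prop :=
  (∀ s ∈ S, s⁻¹ ∈ S) ∧ Subgroup.closure (S : Set G) = ⊤

end PHB
namespace PHB

variable {G : Type*} [Group G]

/-- `f` lies in the closure (in the norm of `D_p(G)/ℂ`) of
`Diff(D_p(G)/ℂ) = span{f_x − f | f ∈ D_p(G), x ∈ G}`. -/
def InClosDiffQ (p : ℝ) (S : Finset G) (f : G → ℂ) : Prop :=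
  ∀ ε : ℝ, 0 < ε → ∃ (n : ℕ) (cc : Fin n → ℂ) (hs : Fin n → (G → ℂ)) (xs : Fin n → G),
    (∀ i, MemDp p S (hs i)) ∧
    qNorm p S (f - ∑ i, cc i • (translateFun (hs i) (xs i) - hs i)) < ε

/-- `f` lies in the closure of `ℓ^p(G)` in the norm of `D_p(G)/ℂ`. -/
def InClosLpQ (p : ℝ) (S : Finset G) (f : G → ℂ) : Prop :=
  ∀ ε : ℝ, 0 < ε → ∃ h : G → ℂ, MemLp' p h ∧ qNorm p S (f - h) < ε

end PHB

/-!
A difference `f_x − f` with `f ∈ D_p(G)` lies in `ℓ^p(G)`: for `x ∈ S` this is the definition of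
`D_p`, and the `x` for which it holds form a subgroup because `ℓ^p` is translation invariant. So the
closure of `Diff` is contained in that of `ℓ^p`.

Conversely, `‖v‖_{D_p/ℂ} ≤ 2 |S|^{1/p} ‖v‖_p`, so it suffices to approximate `h ∈ ℓ^p` in `ℓ^p` by
differences (Woodward's lemma). Truncate `h` to a finitely supported `u`; as `G` is infinite there
are `n` translates `u_x` with pairwise disjoint supports, and `u − (1/n) ∑ₓ u_x` is a difference
while `‖(1/n) ∑ₓ u_x‖_p^p = n^{1-p} ‖u‖_p^p → 0` because `p > 1`.

All distances are measured through `p`-th powers (`dirSum = qNorm ^ p`), for which the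
quasi-triangle inequality `‖a - b‖^p ≤ 2^{p-1} (‖a‖^p + ‖b‖^p)` replaces Minkowski's.
-/

namespace PHB

open scoped Pointwise

section RpowSum

variable {ι E : Type*} [SeminormedAddCommGroup E] {p : ℝ}

theorem two_rpow_sub_one_mul_add_div_two_rpow (δ : ℝ) :
    (2 : ℝ) ^ (p - 1) * (δ / 2 ^ p + δ / 2 ^ p) = δ := by
  rw [Real.rpow_sub_one two_ne_zero]; field_simp; ring

theorem norm_sub_rpow_le (hp : 1 ≤ p) (a b : E) :
    ‖a - b‖ ^ p ≤ 2 ^ (p - 1) * (‖a‖ ^ p + ‖b‖ ^ p) := by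
  have h := NNReal.rpow_add_le_mul_rpow_add_rpow ‖a‖₊ ‖b‖₊ hp
  calc ‖a - b‖ ^ p ≤ (‖a‖ + ‖b‖) ^ p :=
        Real.rpow_le_rpow (norm_nonneg _) (norm_sub_le a b) (by linarith)
    _ ≤ 2 ^ (p - 1) * (‖a‖ ^ p + ‖b‖ ^ p) := by exact_mod_cast h

theorem summable_norm_sub_rpow (hp : 1 ≤ p) {A B : ι → E}
    (hA : Summable fun i => ‖A i‖ ^ p) (hB : Summable fun i => ‖B i‖ ^ p) :
    Summable fun i => ‖A i - B i‖ ^ p :=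
  ((hA.add hB).mul_left _).of_nonneg_of_le (fun _ => by positivity)
    fun i => norm_sub_rpow_le hp (A i) (B i)

theorem tsum_norm_sub_rpow_le (hp : 1 ≤ p) {A B : ι → E}
    (hA : Summable fun i => ‖A i‖ ^ p) (hB : Summable fun i => ‖B i‖ ^ p) :
    ∑' i, ‖A i - B i‖ ^ p ≤ 2 ^ (p - 1) * (∑' i, ‖A i‖ ^ p + ∑' i, ‖B i‖ ^ p) := by
  rw [← hA.tsum_add hB, ← tsum_mul_left]
  exact (summable_norm_sub_rpow hp hA hB).tsum_le_tsum (fun i => norm_sub_rpow_le hp (A i) (B i))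
    ((hA.add hB).mul_left _)

theorem norm_sum_rpow_le_sum_of_subsingleton (hp : 0 < p) (s : Finset ι) (v : ι → E)
    (hv : ∀ i ∈ s, ∀ j ∈ s, v i ≠ 0 → v j ≠ 0 → i = j) :
    ‖∑ i ∈ s, v i‖ ^ p ≤ ∑ i ∈ s, ‖v i‖ ^ p := by
  by_cases h : ∃ i ∈ s, v i ≠ 0
  · obtain ⟨i, hi, hvi⟩ := h
    rw [Finset.sum_eq_single_of_mem i hi fun j hj hji =>
      by_contra fun hvj => hji (hv j hj i hi hvj hvi)]
    exact Finset.single_le_sum (f := fun j => ‖v j‖ ^ p) (fun _ _ => by positivity) hi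
  · push Not at h
    rw [Finset.sum_eq_zero h, norm_zero, Real.zero_rpow hp.ne']
    exact Finset.sum_nonneg fun _ _ => by positivity

end RpowSum

section LpSubspace

variable {ι : Type*} {p : ℝ}

-- `ENNReal.ofReal p = 0` for `p ≤ 0`, so this is `ℓ^p` only for `0 < p` (`mem_lpSubspace`).
def lpSubspace (p : ℝ) : Submodule ℂ (ι → ℂ) where
  carrier := {v | Memℓp v (ENNReal.ofReal p)}
  add_mem' := Memℓp.add
  zero_mem' := zero_memℓp
  smul_mem' c _ hv := hv.const_smul c

theorem mem_lpSubspace (hp : 0 < p) {v : ι → ℂ} : v ∈ lpSubspace p ↔ MemLp' p v := by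
  have hp' : 0 < (ENNReal.ofReal p).toReal := by rwa [ENNReal.toReal_ofReal hp.le]
  change Memℓp v _ ↔ _
  rw [memℓp_gen_iff hp', ENNReal.toReal_ofReal hp.le]
  rfl

theorem mem_lpSubspace_of_finite_support (hp : 0 < p) {v : ι → ℂ}
    (hv : (Function.support v).Finite) : v ∈ lpSubspace p :=
  (mem_lpSubspace hp).2 <| summable_of_hasFiniteSupport <| hv.subset fun g hg => by
    simp only [Function.mem_support, ne_eq] at hg ⊢
    exact fun h => hg (by simp [h, Real.zero_rpow hp.ne'])

theorem tsum_norm_smul_rpow (c : ℂ) (v : ι → ℂ) :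
    ∑' i, ‖(c • v) i‖ ^ p = ‖c‖ ^ p * ∑' i, ‖v i‖ ^ p := by
  simp_rw [Pi.smul_apply, norm_smul, Real.mul_rpow (norm_nonneg _) (norm_nonneg _), tsum_mul_left]

theorem exists_finset_tsum_norm_sub_indicator_rpow_lt (hp : 0 < p) (h : ι → ℂ) {ε : ℝ}
    (hε : 0 < ε) : ∃ F : Finset ι, ∑' i, ‖(h - (F : Set ι).indicator h) i‖ ^ p < ε := by
  obtain ⟨F, hF⟩ :=
    ((tendsto_order.1 (tendsto_tsum_compl_atTop_zero fun i => ‖h i‖ ^ p)).2 ε hε).exists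
  refine ⟨F, lt_of_eq_of_lt ?_ hF⟩
  have hcompl : ∀ i, ‖(h - (F : Set ι).indicator h) i‖ ^ p =
      (F : Set ι)ᶜ.indicator (fun i => ‖h i‖ ^ p) i := fun i => by
    by_cases hi : i ∈ F <;> simp [hi, Real.zero_rpow hp.ne']
  simp_rw [hcompl, ← tsum_subtype]
  rfl

end LpSubspace

variable {G : Type*} [Group G] {p : ℝ}

theorem summable_norm_translateFun_rpow {v : G → ℂ} (hv : MemLp' p v) (x : G) :
    Summable fun g => ‖translateFun v x g‖ ^ p :=
  (Equiv.mulRight x⁻¹).summable_iff.2 hv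

theorem translateFun_mem_lpSubspace (hp : 0 < p) {v : G → ℂ} (hv : v ∈ lpSubspace p) (x : G) :
    translateFun v x ∈ lpSubspace p :=
  (mem_lpSubspace hp).2 <| summable_norm_translateFun_rpow ((mem_lpSubspace hp).1 hv) x

theorem tsum_norm_translateFun_rpow (v : G → ℂ) (x : G) :
    ∑' g, ‖translateFun v x g‖ ^ p = ∑' g, ‖v g‖ ^ p :=
  (Equiv.mulRight x⁻¹).tsum_eq fun g => ‖v g‖ ^ p

theorem translateFun_sub_mem_lpSubspace (hp : 0 < p) {S : Finset G}
    (hS : Subgroup.closure (S : Set G) = ⊤) {u : G → ℂ} (hu : MemDp p S u) (x : G) :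
    translateFun u x - u ∈ lpSubspace p := by
  have hx : x ∈ Subgroup.closure (S : Set G) := hS ▸ Subgroup.mem_top x
  induction hx using Subgroup.closure_induction with
  | mem s hs => exact (mem_lpSubspace hp).2 (hu s hs)
  | one =>
    have h : translateFun u 1 - u = 0 := by ext g; simp [translateFun]
    exact h ▸ zero_mem _
  | mul x y _ _ hx hy =>
    have h : translateFun u (x * y) - u =
        translateFun (translateFun u x - u) y + (translateFun u y - u) := by
      ext g; simp [translateFun, mul_assoc]
    rw [h]
    exact add_mem (translateFun_mem_lpSubspace hp hx y) hy
  | inv x _ hx =>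
    have h : translateFun u x⁻¹ - u = -translateFun (translateFun u x - u) x⁻¹ := by
      ext g; simp [translateFun]
    rw [h]
    exact neg_mem (translateFun_mem_lpSubspace hp hx x⁻¹)

def diffSpan (E : Set (G → ℂ)) : Submodule ℂ (G → ℂ) :=
  Submodule.span ℂ {d | ∃ u ∈ E, ∃ x, translateFun u x - u = d}

theorem translateFun_sub_mem_diffSpan {E : Set (G → ℂ)} {u : G → ℂ} (hu : u ∈ E) (x : G) :
    translateFun u x - u ∈ diffSpan E :=
  Submodule.subset_span ⟨u, hu, x, rfl⟩

theorem diffSpan_mono {E F : Set (G → ℂ)} (h : E ⊆ F) : diffSpan E ≤ diffSpan F :=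
  Submodule.span_mono fun _ ⟨u, hu, x, hd⟩ => ⟨u, h hu, x, hd⟩

theorem diffSpan_le_iff {E : Set (G → ℂ)} {M : Submodule ℂ (G → ℂ)} :
    diffSpan E ≤ M ↔ ∀ u ∈ E, ∀ x, translateFun u x - u ∈ M := by
  rw [diffSpan, Submodule.span_le]
  exact ⟨fun h u hu x => h ⟨u, hu, x, rfl⟩, fun h _ ⟨u, hu, x, hd⟩ => hd ▸ h u hu x⟩

theorem mem_diffSpan_iff {E : Set (G → ℂ)} {d : G → ℂ} :
    d ∈ diffSpan E ↔ ∃ (n : ℕ) (c : Fin n → ℂ) (us : Fin n → G → ℂ) (xs : Fin n → G),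
      (∀ i, us i ∈ E) ∧ ∑ i, c i • (translateFun (us i) (xs i) - us i) = d := by
  rw [diffSpan, Submodule.mem_span_set']
  constructor
  · rintro ⟨n, c, ds, rfl⟩
    choose us hus xs hds using fun i => (ds i).2
    exact ⟨n, c, us, xs, hus, by simp only [hds]⟩
  · rintro ⟨n, c, us, xs, hus, rfl⟩
    exact ⟨n, c, fun i => ⟨_, us i, hus i, xs i, rfl⟩, rfl⟩

theorem diffSpan_memDp_le_lpSubspace (hp : 0 < p) {S : Finset G}
    (hS : Subgroup.closure (S : Set G) = ⊤) : diffSpan {u | MemDp p S u} ≤ lpSubspace p :=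
  diffSpan_le_iff.2 fun _ hu => translateFun_sub_mem_lpSubspace hp hS hu

theorem diffSpan_memLp'_le_lpSubspace (hp : 0 < p) :
    diffSpan {v : G → ℂ | MemLp' p v} ≤ lpSubspace p :=
  diffSpan_le_iff.2 fun _ hu x =>
    have hu : _ ∈ lpSubspace p := (mem_lpSubspace hp).2 hu
    sub_mem (translateFun_mem_lpSubspace hp hu x) hu

section Dirichlet

variable {S : Finset G}

theorem MemDp.sub (hp : 1 ≤ p) {u v : G → ℂ} (hu : MemDp p S u) (hv : MemDp p S v) :
    MemDp p S (u - v) := fun s hs =>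
  (summable_norm_sub_rpow hp (hu s hs) (hv s hs)).congr fun g => by
    simp only [dpTerm, Pi.sub_apply]; ring_nf

theorem dirSum_sub_le (hp : 1 ≤ p) {u v : G → ℂ} (hu : MemDp p S u) (hv : MemDp p S v) :
    dirSum p S (u - v) ≤ 2 ^ (p - 1) * (dirSum p S u + dirSum p S v) := by
  rw [dirSum, dirSum, dirSum, ← Finset.sum_add_distrib, Finset.mul_sum]
  refine Finset.sum_le_sum fun s hs =>
    le_of_eq_of_le ?_ (tsum_norm_sub_rpow_le hp (hu s hs) (hv s hs))
  congr 1; ext g; simp only [dpTerm, Pi.sub_apply]; ring_nf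

theorem MemLp'.memDp (hp : 1 ≤ p) {v : G → ℂ} (hv : MemLp' p v) : MemDp p S v := fun s _ =>
  summable_norm_sub_rpow hp (summable_norm_translateFun_rpow hv s) hv

theorem dirSum_le_of_memLp' (hp : 1 ≤ p) {v : G → ℂ} (hv : MemLp' p v) :
    dirSum p S v ≤ S.card * 2 ^ p * ∑' g, ‖v g‖ ^ p := by
  have hs : ∀ s ∈ S, ∑' g, dpTerm p v s g ≤ 2 ^ p * ∑' g, ‖v g‖ ^ p := fun s _ => by
    calc ∑' g, dpTerm p v s g
        ≤ 2 ^ (p - 1) * (∑' g, ‖translateFun v s g‖ ^ p + ∑' g, ‖v g‖ ^ p) :=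
          tsum_norm_sub_rpow_le hp (summable_norm_translateFun_rpow hv s) hv
      _ = 2 ^ p * ∑' g, ‖v g‖ ^ p := by
          rw [tsum_norm_translateFun_rpow, ← two_mul, ← mul_assoc,
            ← Real.rpow_add_one two_ne_zero, sub_add_cancel]
  calc dirSum p S v ≤ ∑ _s ∈ S, 2 ^ p * ∑' g, ‖v g‖ ^ p := Finset.sum_le_sum hs
    _ = S.card * 2 ^ p * ∑' g, ‖v g‖ ^ p := by rw [Finset.sum_const, nsmul_eq_mul, mul_assoc]

theorem dirSum_nonneg (f : G → ℂ) : 0 ≤ dirSum p S f :=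
  Finset.sum_nonneg fun _ _ => tsum_nonneg fun _ => Real.rpow_nonneg (norm_nonneg _) _

theorem qNorm_lt_iff (hp : 0 < p) {f : G → ℂ} {ε : ℝ} (hε : 0 < ε) :
    qNorm p S f < ε ↔ dirSum p S f < ε ^ p := by
  rw [qNorm, one_div, Real.rpow_inv_lt_iff_of_pos (dirSum_nonneg f) hε.le hp]

theorem forall_exists_qNorm_sub_lt_iff (hp : 0 < p) (P : (G → ℂ) → Prop) (f : G → ℂ) :
    (∀ ε > 0, ∃ h, P h ∧ qNorm p S (f - h) < ε) ↔
      ∀ δ > 0, ∃ h, P h ∧ dirSum p S (f - h) < δ := by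
  constructor
  · intro H δ hδ
    obtain ⟨h, hPh, hq⟩ := H (δ ^ p⁻¹) (Real.rpow_pos_of_pos hδ _)
    rw [qNorm_lt_iff hp (Real.rpow_pos_of_pos hδ _), Real.rpow_inv_rpow hδ.le hp.ne'] at hq
    exact ⟨h, hPh, hq⟩
  · intro H ε hε
    obtain ⟨h, hPh, hd⟩ := H (ε ^ p) (Real.rpow_pos_of_pos hε _)
    exact ⟨h, hPh, (qNorm_lt_iff hp hε).2 hd⟩

theorem inClosDiffQ_iff (hp : 0 < p) {f : G → ℂ} :
    InClosDiffQ p S f ↔ ∀ δ > 0, ∃ d ∈ diffSpan {u | MemDp p S u}, dirSum p S (f - d) < δ := by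
  rw [← forall_exists_qNorm_sub_lt_iff hp]
  refine forall₂_congr fun ε _ => ⟨?_, ?_⟩
  · rintro ⟨n, c, us, xs, hus, hq⟩
    exact ⟨_, mem_diffSpan_iff.2 ⟨n, c, us, xs, hus, rfl⟩, hq⟩
  · rintro ⟨d, hd, hq⟩
    obtain ⟨n, c, us, xs, hus, rfl⟩ := mem_diffSpan_iff.1 hd
    exact ⟨n, c, us, xs, hus, hq⟩

end Dirichlet

theorem exists_finset_card_eq_pairwise_mul_inv_notMem [Infinite G] (K : Finset G) (n : ℕ) :
    ∃ X : Finset G, X.card = n ∧ (X : Set G).Pairwise fun x y => x * y⁻¹ ∉ K := by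
  classical
  induction n with
  | zero => exact ⟨∅, rfl, by simp⟩
  | succ n ih =>
    obtain ⟨X, hcard, hX⟩ := ih
    obtain ⟨x, hx⟩ := Infinite.exists_notMem_finset (X ∪ K * X ∪ K⁻¹ * X)
    simp only [Finset.mem_union, not_or] at hx
    obtain ⟨⟨hxX, hxK⟩, hxK'⟩ := hx
    refine ⟨insert x X, by rw [Finset.card_insert_of_notMem hxX, hcard], ?_⟩
    rw [Finset.coe_insert, Set.pairwise_insert]
    refine ⟨hX, fun y hy _ => ⟨fun h => hxK ?_, fun h => hxK' ?_⟩⟩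
    · simpa using Finset.mul_mem_mul h hy
    · simpa using Finset.mul_mem_mul (Finset.inv_mem_inv h) hy

theorem exists_finset_card_eq_pairwiseDisjoint_support_translateFun [Infinite G] {u : G → ℂ}
    (hu : (Function.support u).Finite) (n : ℕ) :
    ∃ X : Finset G, X.card = n ∧
      (X : Set G).PairwiseDisjoint fun x => Function.support (translateFun u x) := by
  classical
  obtain ⟨X, hcard, hX⟩ :=
    exists_finset_card_eq_pairwise_mul_inv_notMem (hu.toFinset⁻¹ * hu.toFinset) n
  refine ⟨X, hcard, fun x hx y hy hxy => Set.disjoint_left.2 fun g hgx hgy => hX hx hy hxy ?_⟩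
  have hmem := Finset.mul_mem_mul (Finset.inv_mem_inv (hu.mem_toFinset.2 hgx))
    (hu.mem_toFinset.2 hgy)
  simpa [mul_assoc] using hmem

theorem tsum_norm_sum_translateFun_rpow_le (hp : 0 < p) {u : G → ℂ} (hu : MemLp' p u)
    {X : Finset G}
    (hX : (X : Set G).PairwiseDisjoint fun x => Function.support (translateFun u x)) :
    ∑' g, ‖(∑ x ∈ X, translateFun u x) g‖ ^ p ≤ X.card * ∑' g, ‖u g‖ ^ p := by
  have hW : MemLp' p (∑ x ∈ X, translateFun u x) := (mem_lpSubspace hp).1 <|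
    Submodule.sum_mem _ fun x _ => translateFun_mem_lpSubspace hp ((mem_lpSubspace hp).2 hu) x
  have hsum : ∀ x ∈ X, Summable fun g => ‖translateFun u x g‖ ^ p :=
    fun x _ => summable_norm_translateFun_rpow hu x
  calc ∑' g, ‖(∑ x ∈ X, translateFun u x) g‖ ^ p
      ≤ ∑' g, ∑ x ∈ X, ‖translateFun u x g‖ ^ p :=
        hW.tsum_le_tsum (fun g => by
          rw [Finset.sum_apply]
          exact norm_sum_rpow_le_sum_of_subsingleton hp X _ fun x hx y hy hgx hgy =>
            by_contra fun hxy => Set.disjoint_left.1 (hX hx hy hxy) hgx hgy)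
          (summable_sum hsum)
    _ = X.card * ∑' g, ‖u g‖ ^ p := by
        simp [Summable.tsum_finsetSum hsum, tsum_norm_translateFun_rpow]

theorem exists_add_mem_diffSpan_tsum_norm_rpow_le [Infinite G] (hp : 0 < p) {u : G → ℂ}
    (hu : (Function.support u).Finite) {n : ℕ} (hn : n ≠ 0) :
    ∃ e : G → ℂ, e ∈ lpSubspace p ∧ u + e ∈ diffSpan {u} ∧
      ∑' g, ‖e g‖ ^ p ≤ (n : ℝ) ^ (1 - p) * ∑' g, ‖u g‖ ^ p := by
  obtain ⟨X, hcard, hX⟩ := exists_finset_card_eq_pairwiseDisjoint_support_translateFun hu n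
  have hu' : u ∈ lpSubspace p := mem_lpSubspace_of_finite_support hp hu
  have hn' : (0 : ℝ) < n := by positivity
  set W := ∑ x ∈ X, translateFun u x with hW
  refine ⟨-(n : ℂ)⁻¹ • W, Submodule.smul_mem _ _ <|
    Submodule.sum_mem _ fun x _ => translateFun_mem_lpSubspace hp hu' x, ?_, ?_⟩
  · have h : u + -(n : ℂ)⁻¹ • W = -(n : ℂ)⁻¹ • ∑ x ∈ X, (translateFun u x - u) := by
      rw [Finset.sum_sub_distrib, ← hW, Finset.sum_const, hcard, ← Nat.cast_smul_eq_nsmul ℂ,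
        smul_sub, smul_smul, neg_mul, inv_mul_cancel₀ (Nat.cast_ne_zero.2 hn)]
      module
    rw [h]
    exact Submodule.smul_mem _ _ <| Submodule.sum_mem _ fun x _ =>
      translateFun_sub_mem_diffSpan (Set.mem_singleton u) x
  · calc ∑' g, ‖(-(n : ℂ)⁻¹ • W) g‖ ^ p = ((n : ℝ) ^ p)⁻¹ * ∑' g, ‖W g‖ ^ p := by
          rw [tsum_norm_smul_rpow, norm_neg, norm_inv, Complex.norm_natCast,
            Real.inv_rpow hn'.le]
      _ ≤ ((n : ℝ) ^ p)⁻¹ * (n * ∑' g, ‖u g‖ ^ p) := by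
          gcongr
          rw [← hcard]
          exact tsum_norm_sum_translateFun_rpow_le hp ((mem_lpSubspace hp).1 hu') hX
      _ = (n : ℝ) ^ (1 - p) * ∑' g, ‖u g‖ ^ p := by
          rw [Real.rpow_sub hn', Real.rpow_one]; ring

theorem exists_mem_diffSpan_tsum_norm_sub_rpow_lt [Infinite G] (hp : 1 < p) {h : G → ℂ}
    (hh : MemLp' p h) {δ : ℝ} (hδ : 0 < δ) :
    ∃ d ∈ diffSpan {v : G → ℂ | MemLp' p v}, ∑' g, ‖(d - h) g‖ ^ p < δ := by
  have hp0 : 0 < p := zero_lt_one.trans hp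
  have hδ' : 0 < δ / 2 ^ p := by positivity
  obtain ⟨F, hF⟩ := exists_finset_tsum_norm_sub_indicator_rpow_lt hp0 h hδ'
  set u := (F : Set G).indicator h
  have hu : (Function.support u).Finite := F.finite_toSet.subset Set.support_indicator_subset
  have hu' : u ∈ lpSubspace p := mem_lpSubspace_of_finite_support hp0 hu
  have hlim : Tendsto (fun n : ℕ => (n : ℝ) ^ (1 - p) * ∑' g, ‖u g‖ ^ p) atTop (𝓝 0) := by
    simpa [neg_sub] using ((tendsto_rpow_neg_atTop (sub_pos.2 hp)).comp
      tendsto_natCast_atTop_atTop).mul_const (∑' g, ‖u g‖ ^ p)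
  obtain ⟨n, hn, hnu⟩ := ((eventually_ne_atTop 0).and (hlim.eventually (gt_mem_nhds hδ'))).exists
  obtain ⟨e, he, hue, heu⟩ := exists_add_mem_diffSpan_tsum_norm_rpow_le hp0 hu hn
  refine ⟨u + e, diffSpan_mono (Set.singleton_subset_iff.2 ((mem_lpSubspace hp0).1 hu')) hue, ?_⟩
  have hhu : MemLp' p (h - u) :=
    (mem_lpSubspace hp0).1 (sub_mem ((mem_lpSubspace hp0).2 hh) hu')
  calc ∑' g, ‖(u + e - h) g‖ ^ p = ∑' g, ‖e g - (h - u) g‖ ^ p := by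
        congr 1; ext g; simp only [Pi.add_apply, Pi.sub_apply]; ring_nf
    _ ≤ 2 ^ (p - 1) * (∑' g, ‖e g‖ ^ p + ∑' g, ‖(h - u) g‖ ^ p) :=
        tsum_norm_sub_rpow_le hp.le ((mem_lpSubspace hp0).1 he) hhu
    _ < 2 ^ (p - 1) * (δ / 2 ^ p + δ / 2 ^ p) := by gcongr; linarith
    _ = δ := two_rpow_sub_one_mul_add_div_two_rpow δ

theorem exists_mem_diffSpan_dirSum_sub_lt [Infinite G] (hp : 1 < p) (S : Finset G)
    {h : G → ℂ} (hh : MemLp' p h) {δ : ℝ} (hδ : 0 < δ) :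
    ∃ d ∈ diffSpan {u | MemDp p S u}, dirSum p S (d - h) < δ := by
  have hp0 : 0 < p := zero_lt_one.trans hp
  have hC : (0 : ℝ) < S.card * 2 ^ p + 1 := by positivity
  obtain ⟨d, hd, hdh⟩ := exists_mem_diffSpan_tsum_norm_sub_rpow_lt hp hh (div_pos hδ hC)
  refine ⟨d, diffSpan_mono (fun _ hv => MemLp'.memDp hp.le hv) hd, ?_⟩
  have hdh' : MemLp' p (d - h) :=
    (mem_lpSubspace hp0).1 <|
      sub_mem (diffSpan_memLp'_le_lpSubspace hp0 hd) ((mem_lpSubspace hp0).2 hh)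
  have hnonneg : 0 ≤ ∑' g, ‖(d - h) g‖ ^ p := tsum_nonneg fun _ => by positivity
  calc dirSum p S (d - h) ≤ S.card * 2 ^ p * ∑' g, ‖(d - h) g‖ ^ p :=
        dirSum_le_of_memLp' hp.le hdh'
    _ ≤ (S.card * 2 ^ p + 1) * ∑' g, ‖(d - h) g‖ ^ p := by gcongr; linarith
    _ < (S.card * 2 ^ p + 1) * (δ / (S.card * 2 ^ p + 1)) := by gcongr
    _ = δ := mul_div_cancel₀ δ hC.ne'

end PHB

open PHB

/-- in `D_p(G)/ℂ`, the closure of `Diff(D_p(G)/ℂ)` equals the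
closure of `ℓ^p(G)`. -/
theorem closDiff_eq_closLp {G : Type*} [Group G] [Infinite G] (S : Finset G)
    (hS : PHB.SymmGen S) (p : ℝ) (hp : 1 < p) :
    ∀ f : G → ℂ, PHB.MemDp p S f →
      (PHB.InClosDiffQ p S f ↔ PHB.InClosLpQ p S f) := by
  intro f hf
  have hp0 : 0 < p := zero_lt_one.trans hp
  have hDiff := diffSpan_memDp_le_lpSubspace hp0 hS.2
  rw [inClosDiffQ_iff hp0, InClosLpQ, forall_exists_qNorm_sub_lt_iff hp0]
  constructor
  · intro hD δ hδ
    obtain ⟨d, hd, hfd⟩ := hD δ hδ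
    exact ⟨d, (mem_lpSubspace hp0).1 (hDiff hd), hfd⟩
  · intro hL δ hδ
    have hδ' : 0 < δ / 2 ^ p := by positivity
    obtain ⟨h, hh, hfh⟩ := hL _ hδ'
    obtain ⟨d, hd, hdh⟩ := exists_mem_diffSpan_dirSum_sub_lt hp S hh hδ'
    have hdh_mem : MemDp p S (d - h) :=
      ((mem_lpSubspace hp0).1 (sub_mem (hDiff hd) ((mem_lpSubspace hp0).2 hh))).memDp hp.le
    refine ⟨d, hd, ?_⟩
    calc dirSum p S (f - d) = dirSum p S ((f - h) - (d - h)) := by rw [sub_sub_sub_cancel_right]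
      _ ≤ 2 ^ (p - 1) * (dirSum p S (f - h) + dirSum p S (d - h)) :=
          dirSum_sub_le hp.le (hf.sub hp.le (hh.memDp hp.le)) hdh_mem
      _ < 2 ^ (p - 1) * (δ / 2 ^ p + δ / 2 ^ p) := by gcongr
      _ = δ := two_rpow_sub_one_mul_add_div_two_rpow δ
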